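/- Let L₁ and L₂ be finite co-Heyting algebras, each generated over a common subalgebra L₀ by a primitive tuple, and suppose these primitive tuples have the same signature (g, H, r) in L₀. Then there is an isomorphism of co-Heyting algebras from L₁ to L₂ fixing L₀ pointwise. -/

import Mathlib

/-- `Ll b a` means `b ≪ a`: `a \ b = a` and `b ≤ a`. -/
def Ll {L : Type*} [CoheytingAlgebra L] (b a : L) : Prop := a \ b = a ∧ b ≤ a

/-- `S` is (the underlying set of) a co-Heyting subalgebra. -/
def IsSubalg {L : Type*} [CoheytingAlgebra L] (S : Set L) : Prop :=
  ⊥ ∈ S ∧ ⊤ ∈ S ∧ ∀ a ∈ S, ∀ b ∈ S, a ⊔ b ∈ S ∧ a ⊓ b ∈ S ∧ a \ b ∈ S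

/-- `g` is join irreducible in the subalgebra `S`. -/
def SupIrredIn {L : Type*} [CoheytingAlgebra L] (S : Set L) (g : L) : Prop :=
  g ∈ S ∧ g ≠ ⊥ ∧ ∀ x ∈ S, ∀ y ∈ S, g = x ⊔ y → g = x ∨ g = y

/-- `(x₁, x₂)` is a primitive tuple over the subalgebra `S`, with witness `g`
(join irreducible in `S`) whose predecessor in `S` is `gm` (`g⁻`). -/
def Primitive {L : Type*} [CoheytingAlgebra L] (S : Set L) (g gm x₁ x₂ : L) : Prop :=
  x₁ ∉ S ∧ x₂ ∉ S ∧ SupIrredIn S g ∧ IsLUB {b | b ∈ S ∧ b < g} gm ∧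
  gm ⊓ x₁ ∈ S ∧ gm ⊓ x₂ ∈ S ∧
  ((x₁ = x₂ ∧ Ll (gm ⊓ x₁) x₁ ∧ Ll x₁ g) ∨
   (x₁ ≠ x₂ ∧ x₁ ⊓ x₂ ∈ S ∧ g \ x₁ = x₂ ∧ g \ x₂ = x₁))

/-- `T` is the co-Heyting subalgebra generated by `S ∪ {x₁, x₂}`. -/
def GeneratesOver {L : Type*} [CoheytingAlgebra L] (S T : Set L) (x₁ x₂ : L) : Prop :=
  IsSubalg T ∧ S ⊆ T ∧ x₁ ∈ T ∧ x₂ ∈ T ∧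
  ∀ Tp : Set L, IsSubalg Tp → S ⊆ Tp → x₁ ∈ Tp → x₂ ∈ Tp → T ⊆ Tp

/-- An embedding of co-Heyting algebras: injective and preserving `⊥`, `⊤`, `⊔`, `⊓`, `\`. -/
def IsCoheytingEmb {K L : Type*} [CoheytingAlgebra K] [CoheytingAlgebra L] (f : K → L) : Prop :=
  Function.Injective f ∧ f ⊥ = ⊥ ∧ f ⊤ = ⊤ ∧
    (∀ a b, f (a ⊔ b) = f a ⊔ f b) ∧ (∀ a b, f (a ⊓ b) = f a ⊓ f b) ∧
    (∀ a b, f (a \ b) = f a \ f b)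

/-!
Every element of a primitive extension has a normal form `f a ⊔ x₁ ⊔ x₂`, with either generator
possibly omitted. These joins are closed under `⊓` and `\` because meets and differences of two
generators reduce to them, using that `g⁻ ⊓ xᵢ` lies in `L₀` and that `x₁ ⊔ x₂ = g` (when
`x₁ ≠ x₂`) or `g⁻ ⊓ x₁ ≪ x₁` (when `x₁ = x₂`). The order between two normal forms is decided inside
`L₀` by `g`, the elements `hᵢ` with `f hᵢ = g⁻ ⊓ xᵢ` and whether `x₁ = x₂`, that is, by the
signature. Matching the normal forms of `L₁` and `L₂` is therefore an order isomorphism, and an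
order isomorphism of co-Heyting algebras preserves all operations.
-/

open Set Function

theorem supClosure_induction {α : Type*} [SemilatticeSup α] {s : Set α} {p : α → Prop}
    (mem : ∀ a ∈ s, p a) (sup : ∀ a b, p a → p b → p (a ⊔ b)) {a : α}
    (ha : a ∈ supClosure s) : p a :=
  supClosure_min (t := {a | p a}) mem (fun _ ha _ hb => sup _ _ ha hb) ha

theorem exists_orderIso_of_le_iff {ι α β : Type*} [PartialOrder α] [PartialOrder β]
    {u : ι → α} {v : ι → β} (hu : Surjective u) (hv : Surjective v)
    (h : ∀ i j, u i ≤ u j ↔ v i ≤ v j) : ∃ φ : α ≃o β, ∀ i, φ (u i) = v i := by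
  set F : α → β := v ∘ surjInv hu
  have hF : ∀ a b, F a ≤ F b ↔ a ≤ b := fun a b => by
    simp only [F, comp_apply, ← h, surjInv_eq hu]
  have hFu : ∀ i, F (u i) = v i := fun i =>
    le_antisymm ((h _ _).1 (surjInv_eq hu _).le) ((h _ _).1 (surjInv_eq hu _).ge)
  refine ⟨OrderIso.ofSurjective (OrderEmbedding.ofMapLEIff F hF) ?_, hFu⟩
  intro b
  obtain ⟨i, rfl⟩ := hv b
  exact ⟨u i, hFu i⟩

theorem sdiff_eq_self_of_forall_lt_le {α : Type*} [GeneralizedCoheytingAlgebra α] {a b : α}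
    (hlt : ∀ c < a, c ≤ b) (hab : ¬ a ≤ b) : a \ b = a := by
  refine sdiff_le.eq_or_lt.resolve_right fun h => hab ?_
  calc a ≤ b ⊔ a \ b := le_sup_sdiff
    _ ≤ b := sup_le le_rfl (hlt _ h)

theorem isSubalg_supClosure {L : Type*} [CoheytingAlgebra L] {G : Set L} (hbot : ⊥ ∈ G)
    (htop : ⊤ ∈ G) (hinf : ∀ u ∈ G, ∀ v ∈ G, u ⊓ v ∈ supClosure G)
    (hsdiff : ∀ u ∈ G, ∀ v ∈ G, u \ v ∈ supClosure G) : IsSubalg (supClosure G) := by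
  have sup_mem : SupClosed (supClosure G) := supClosed_supClosure
  have inf_mem : ∀ w ∈ supClosure G, ∀ v ∈ G, w ⊓ v ∈ supClosure G := fun w hw v hv =>
    supClosure_induction (p := (· ⊓ v ∈ supClosure G)) (fun u hu => hinf u hu v hv)
      (fun a b ha hb => (inf_sup_right a b v).symm ▸ sup_mem ha hb) hw
  have sdiff_mem : ∀ w ∈ supClosure G, ∀ v ∈ G, w \ v ∈ supClosure G := fun w hw v hv =>
    supClosure_induction (p := (· \ v ∈ supClosure G)) (fun u hu => hsdiff u hu v hv)
      (fun a b ha hb => (sup_sdiff (a := a) (b := b) (c := v)).symm ▸ sup_mem ha hb) hw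
  refine ⟨subset_supClosure hbot, subset_supClosure htop, fun w hw w' hw' =>
    ⟨sup_mem hw hw', ?_, ?_⟩⟩
  · exact supClosure_induction (p := (w ⊓ · ∈ supClosure G)) (inf_mem w hw)
      (fun a b ha hb => (inf_sup_left w a b).symm ▸ sup_mem ha hb) hw'
  · refine supClosure_induction (p := fun w' => ∀ w ∈ supClosure G, w \ w' ∈ supClosure G)
      (fun v hv w hw => sdiff_mem w hw v hv) (fun a b ha hb w hw => ?_) hw' w hw
    rw [← sdiff_sdiff_left]
    exact hb _ (ha w hw)

namespace IsCoheytingEmb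

variable {K L : Type*} [CoheytingAlgebra K] [CoheytingAlgebra L] {f : K → L}

theorem injective (hf : IsCoheytingEmb f) : Injective f := hf.1

theorem map_bot (hf : IsCoheytingEmb f) : f ⊥ = ⊥ := hf.2.1

theorem map_top (hf : IsCoheytingEmb f) : f ⊤ = ⊤ := hf.2.2.1

theorem map_sup (hf : IsCoheytingEmb f) (a b : K) : f (a ⊔ b) = f a ⊔ f b := hf.2.2.2.1 a b

theorem map_inf (hf : IsCoheytingEmb f) (a b : K) : f (a ⊓ b) = f a ⊓ f b := hf.2.2.2.2.1 a b

theorem map_sdiff (hf : IsCoheytingEmb f) (a b : K) : f (a \ b) = f a \ f b :=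
  hf.2.2.2.2.2 a b

theorem le_iff_le (hf : IsCoheytingEmb f) {a b : K} : f a ≤ f b ↔ a ≤ b := by
  rw [← sup_eq_right, ← hf.map_sup, hf.injective.eq_iff, sup_eq_right]

theorem monotone (hf : IsCoheytingEmb f) : Monotone f := fun _ _ => hf.le_iff_le.2

theorem strictMono (hf : IsCoheytingEmb f) : StrictMono f :=
  hf.monotone.strictMono_of_injective hf.injective

theorem le_sup_iff (hf : IsCoheytingEmb f) {a b : K} {y : L} :
    f a ≤ f b ⊔ y ↔ f (a \ b) ≤ y := by
  rw [hf.map_sdiff, sdiff_le_iff]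

end IsCoheytingEmb

theorem OrderIso.isCoheytingEmb {K L : Type*} [CoheytingAlgebra K] [CoheytingAlgebra L]
    (φ : K ≃o L) : IsCoheytingEmb φ :=
  ⟨φ.injective, map_bot φ, map_top φ, map_sup φ, map_inf φ, map_sdiff φ⟩

namespace Primitive

section

variable {L : Type*} [CoheytingAlgebra L] {S : Set L} {g gm x₁ x₂ : L}

theorem symm (hp : Primitive S g gm x₁ x₂) : Primitive S g gm x₂ x₁ := by
  obtain ⟨h₁, h₂, hg, hgm, hm₁, hm₂, hr⟩ := hp
  refine ⟨h₂, h₁, hg, hgm, hm₂, hm₁, ?_⟩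
  rcases hr with ⟨rfl, hl₁, hl₂⟩ | ⟨hne, hm, hs₁, hs₂⟩
  · exact Or.inl ⟨rfl, hl₁, hl₂⟩
  · exact Or.inr ⟨hne.symm, inf_comm x₁ x₂ ▸ hm, hs₂, hs₁⟩

theorem notMem (hp : Primitive S g gm x₁ x₂) : x₁ ∉ S := hp.1

theorem pred_inf_mem (hp : Primitive S g gm x₁ x₂) : gm ⊓ x₁ ∈ S := hp.2.2.2.2.1

theorem of_eq (hp : Primitive S g gm x₁ x₂) (h : x₁ = x₂) : Ll (gm ⊓ x₁) x₁ ∧ Ll x₁ g :=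
  (hp.2.2.2.2.2.2.resolve_right fun h' => h'.1 h).2

theorem of_ne (hp : Primitive S g gm x₁ x₂) (h : x₁ ≠ x₂) :
    x₁ ⊓ x₂ ∈ S ∧ g \ x₁ = x₂ ∧ g \ x₂ = x₁ :=
  (hp.2.2.2.2.2.2.resolve_left fun h' => h h'.1).2

theorem left_le (hp : Primitive S g gm x₁ x₂) : x₁ ≤ g := by
  by_cases h : x₁ = x₂
  · exact (hp.of_eq h).2.2
  · exact (hp.of_ne h).2.2 ▸ sdiff_le

theorem le_iff_eq (hp : Primitive S g gm x₁ x₂) : x₁ ≤ x₂ ↔ x₁ = x₂ := by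
  refine ⟨fun hle => by_contra fun hne => hp.notMem ?_, fun h => h.le⟩
  simpa [inf_eq_left.2 hle] using (hp.of_ne hne).1

theorem sup_eq (hp : Primitive S g gm x₁ x₂) (h : x₁ ≠ x₂) : x₁ ⊔ x₂ = g := by
  refine le_antisymm (sup_le hp.left_le hp.symm.left_le) ?_
  calc g ≤ g \ x₂ ⊔ x₂ := le_sdiff_sup
    _ = x₁ ⊔ x₂ := by rw [(hp.of_ne h).2.2]

end

variable {L₀ L : Type*} [CoheytingAlgebra L₀] [CoheytingAlgebra L] {f : L₀ → L}
  {g gm h₁ a : L₀} {x₁ x₂ : L}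

theorem le_pred (hf : IsCoheytingEmb f) (hp : Primitive (range f) (f g) (f gm) x₁ x₂)
    (ha : a < g) : a ≤ gm :=
  hf.le_iff_le.1 (hp.2.2.2.1.1 ⟨mem_range_self a, hf.strictMono ha⟩)

theorem not_le_pred (hf : IsCoheytingEmb f) (hp : Primitive (range f) (f g) (f gm) x₁ x₂) :
    ¬ g ≤ gm := fun h =>
  hp.notMem (inf_eq_right.2 (hp.left_le.trans (hf.monotone h)) ▸ hp.pred_inf_mem)

theorem inf_le_pred (hf : IsCoheytingEmb f) (hp : Primitive (range f) (f g) (f gm) x₁ x₂)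
    (ha : ¬ g ≤ a) : f a ⊓ x₁ ≤ f gm :=
  calc f a ⊓ x₁ ≤ f (a ⊓ g) := hf.map_inf a g ▸ inf_le_inf_left _ hp.left_le
    _ ≤ f gm := hf.monotone (hp.le_pred hf (inf_lt_right.2 ha))

theorem le_map_iff (hf : IsCoheytingEmb f) (hp : Primitive (range f) (f g) (f gm) x₁ x₂) :
    x₁ ≤ f a ↔ g ≤ a := by
  refine ⟨fun h => by_contra fun ha => hp.notMem ?_, fun h => hp.left_le.trans (hf.monotone h)⟩
  have hx : f gm ⊓ x₁ = x₁ := inf_eq_right.2 (inf_eq_right.2 h ▸ hp.inf_le_pred hf ha)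
  exact hx ▸ hp.pred_inf_mem

theorem map_le_iff (hf : IsCoheytingEmb f) (hp : Primitive (range f) (f g) (f gm) x₁ x₂)
    (hh₁ : f h₁ = f gm ⊓ x₁) : f a ≤ x₁ ↔ a ≤ h₁ := by
  refine ⟨fun h => ?_, fun h => (hf.monotone h).trans (hh₁ ▸ inf_le_right)⟩
  have hag : a ≤ g := hf.le_iff_le.1 (h.trans hp.left_le)
  have hne : a ≠ g := by
    rintro rfl
    exact hp.notMem ⟨a, le_antisymm h hp.left_le⟩
  rw [← hf.le_iff_le, hh₁]
  exact le_inf (hf.monotone (hp.le_pred hf (hag.lt_of_ne hne))) h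

theorem map_inf_eq (hf : IsCoheytingEmb f) (hp : Primitive (range f) (f g) (f gm) x₁ x₂)
    (hh₁ : f h₁ = f gm ⊓ x₁) (ha : ¬ g ≤ a) : f a ⊓ x₁ = f (a ⊓ h₁) := by
  rw [hf.map_inf, hh₁]
  exact le_antisymm (le_inf inf_le_left (le_inf (hp.inf_le_pred hf ha) inf_le_right))
    (inf_le_inf_left _ inf_le_right)

theorem sdiff_pred (hf : IsCoheytingEmb f) (hp : Primitive (range f) (f g) (f gm) x₁ x₂) :
    x₁ \ f gm = x₁ := by
  by_cases h : x₁ = x₂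
  · rw [← sdiff_inf_self_left, inf_comm]
    exact (hp.of_eq h).1.1
  · have hg : g \ gm = g :=
      sdiff_eq_self_of_forall_lt_le (fun _ => hp.le_pred hf) (hp.not_le_pred hf)
    calc x₁ \ f gm = (f g \ x₂) \ f gm := by rw [(hp.of_ne h).2.2]
      _ = f (g \ gm) \ x₂ := by rw [sdiff_right_comm, hf.map_sdiff]
      _ = x₁ := by rw [hg, (hp.of_ne h).2.2]

theorem sdiff_map (hf : IsCoheytingEmb f) (hp : Primitive (range f) (f g) (f gm) x₁ x₂)
    (ha : ¬ g ≤ a) : x₁ \ f a = x₁ := by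
  refine le_antisymm sdiff_le ?_
  calc x₁ = x₁ \ f gm := (hp.sdiff_pred hf).symm
    _ ≤ x₁ \ (x₁ ⊓ f a) := sdiff_le_sdiff_left (inf_comm x₁ (f a) ▸ hp.inf_le_pred hf ha)
    _ = x₁ \ f a := sdiff_inf_self_left _ _

theorem sdiff_eq_of_ne (hf : IsCoheytingEmb f) (hp : Primitive (range f) (f g) (f gm) x₁ x₂)
    (hne : x₁ ≠ x₂) : x₁ \ x₂ = x₁ := by
  obtain ⟨m, hm⟩ := (hp.of_ne hne).1
  have hm' : ¬ g ≤ m := fun h =>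
    hne (hp.le_iff_eq.1 ((hp.le_map_iff hf).2 h |>.trans (hm.le.trans inf_le_right)))
  rw [← sdiff_inf_self_left, ← hm, hp.sdiff_map hf hm']

theorem le_map_sup_iff (hf : IsCoheytingEmb f) (hp : Primitive (range f) (f g) (f gm) x₁ x₂)
    (hh₁ : f h₁ = f gm ⊓ x₁) (hne : x₁ ≠ x₂) : x₁ ≤ f a ⊔ x₂ ↔ g ≤ a := by
  refine ⟨fun h => by_contra fun ha => hp.notMem ?_,
    fun h => le_sup_of_le_left ((hp.le_map_iff hf).2 h)⟩
  obtain ⟨m, hm⟩ := (hp.of_ne hne).1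
  refine ⟨a ⊓ h₁ ⊔ m, ?_⟩
  rw [hf.map_sup, hm, ← hp.map_inf_eq hf hh₁ ha, inf_comm (f a), ← inf_sup_left,
    inf_eq_left.2 h]

end Primitive

section NormalForm

variable {L₀ L : Type*} {f : L₀ → L} {a : L₀} {x₁ x₂ : L}

def adjoinGens (f : L₀ → L) (x₁ x₂ : L) : Set L := {x₁, x₂} ∪ range f

theorem adjoinGens_comm : adjoinGens f x₂ x₁ = adjoinGens f x₁ x₂ := by
  rw [adjoinGens, adjoinGens, pair_comm]

variable [SemilatticeSup L] [OrderBot L]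

def normalForm (f : L₀ → L) (x₁ x₂ : L) (p : L₀ × Bool × Bool) : L :=
  f p.1 ⊔ (cond p.2.1 x₁ ⊥ ⊔ cond p.2.2 x₂ ⊥)

theorem normalForm_swap (b c : Bool) :
    normalForm f x₂ x₁ (a, c, b) = normalForm f x₁ x₂ (a, b, c) := by
  simp only [normalForm, sup_comm (cond c x₂ ⊥)]

theorem normalForm_le_iff (b c : Bool) (w : L) :
    normalForm f x₁ x₂ (a, b, c) ≤ w ↔ f a ≤ w ∧ (b → x₁ ≤ w) ∧ (c → x₂ ≤ w) := by
  cases b <;> cases c <;> simp [normalForm]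

end NormalForm

section NormalFormEmb

variable {L₀ L : Type*} [CoheytingAlgebra L₀] [CoheytingAlgebra L] {f : L₀ → L} {x₁ x₂ : L}

theorem supClosed_range_normalForm (hf : IsCoheytingEmb f) :
    SupClosed (range (normalForm f x₁ x₂)) := by
  rintro _ ⟨⟨a, b, c⟩, rfl⟩ _ ⟨⟨a', b', c'⟩, rfl⟩
  refine ⟨(a ⊔ a', b || b', c || c'), ?_⟩
  cases b <;> cases b' <;> cases c <;> cases c' <;> simp [normalForm, hf.map_sup] <;> ac_rfl

theorem adjoinGens_subset_range_normalForm (hf : IsCoheytingEmb f) :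
    adjoinGens f x₁ x₂ ⊆ range (normalForm f x₁ x₂) := by
  rintro _ ((rfl | rfl) | ⟨a, rfl⟩)
  · exact ⟨(⊥, true, false), by simp [normalForm, hf.map_bot]⟩
  · exact ⟨(⊥, false, true), by simp [normalForm, hf.map_bot]⟩
  · exact ⟨(a, false, false), by simp [normalForm]⟩

end NormalFormEmb

section Core

variable {L₀ : Type*} [Lattice L₀] [OrderBot L₀]

open Classical in
/-- `coreOf g h₁ h₂ R b c` is the largest `a` with `f a` below the join of the generators
selected by `b` and `c`, where `f hᵢ = f g⁻ ⊓ xᵢ` and `R` stands for `x₁ = x₂`. -/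
noncomputable def coreOf (g h₁ h₂ : L₀) (R : Prop) : Bool → Bool → L₀
  | false, false => ⊥
  | true, false => h₁
  | false, true => h₂
  | true, true => if R then h₁ else g

def NormalFormLE (g h₁ h₂ : L₀) (R : Prop) (p q : L₀ × Bool × Bool) : Prop :=
  p.1 ≤ q.1 ⊔ coreOf g h₁ h₂ R q.2.1 q.2.2 ∧
    (p.2.1 → q.2.1 ∨ q.2.2 ∧ R ∨ g ≤ q.1) ∧ (p.2.2 → q.2.2 ∨ q.2.1 ∧ R ∨ g ≤ q.1)

end Core

namespace Primitive

variable {L₀ L : Type*} [CoheytingAlgebra L₀] [CoheytingAlgebra L] {f : L₀ → L}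
  {g gm h₁ h₂ a : L₀} {x₁ x₂ : L} {R : Prop}

theorem map_sdiff_mem (hf : IsCoheytingEmb f) (hp : Primitive (range f) (f g) (f gm) x₁ x₂)
    (hh₁ : f h₁ = f gm ⊓ x₁) (a : L₀) : f a \ x₁ ∈ supClosure (adjoinGens f x₁ x₂) := by
  by_cases ha : g ≤ a
  · have hsplit : f a \ x₁ = f (a \ g) ⊔ f g \ x₁ := by
      refine le_antisymm (sdiff_le_iff.2 ?_) (sup_le ?_ (sdiff_le_sdiff_right (hf.monotone ha)))
      · calc f a ≤ f (a \ g) ⊔ f g := hf.map_sup _ _ ▸ hf.monotone le_sdiff_sup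
          _ ≤ x₁ ⊔ (f (a \ g) ⊔ f g \ x₁) :=
            sup_le (le_sup_of_le_right le_sup_left)
              (le_sup_sdiff.trans (sup_le_sup_left le_sup_right _))
      · exact hf.map_sdiff a g ▸ sdiff_le_sdiff_left hp.left_le
    have hg : f g \ x₁ ∈ adjoinGens f x₁ x₂ := by
      by_cases h : x₁ = x₂
      · rw [(hp.of_eq h).2.1]
        exact Or.inr (mem_range_self g)
      · exact Or.inl (Or.inr (hp.of_ne h).2.1)
    rw [hsplit]
    exact sup_mem_supClosure (Or.inr (mem_range_self _)) hg
  · rw [← sdiff_inf_self_left, hp.map_inf_eq hf hh₁ ha, ← hf.map_sdiff]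
    exact subset_supClosure (Or.inr (mem_range_self _))

theorem inf_sdiff_mem (hf : IsCoheytingEmb f) (hp : Primitive (range f) (f g) (f gm) x₁ x₂)
    {v : L} (hv : v ∈ adjoinGens f x₁ x₂) :
    x₁ ⊓ v ∈ supClosure (adjoinGens f x₁ x₂) ∧ x₁ \ v ∈ supClosure (adjoinGens f x₁ x₂) ∧
      v \ x₁ ∈ supClosure (adjoinGens f x₁ x₂) := by
  obtain ⟨h₁, hh₁⟩ := hp.pred_inf_mem
  have hx₁ : x₁ ∈ supClosure (adjoinGens f x₁ x₂) := subset_supClosure (Or.inl (Or.inl rfl))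
  have hbot : ⊥ ∈ supClosure (adjoinGens f x₁ x₂) := subset_supClosure (Or.inr ⟨⊥, hf.map_bot⟩)
  rcases hv with (rfl | rfl) | ⟨a, rfl⟩
  · simpa using ⟨hx₁, hbot⟩
  · by_cases h : x₁ = v
    · subst h
      simpa using ⟨hx₁, hbot⟩
    · rw [hp.sdiff_eq_of_ne hf h, hp.symm.sdiff_eq_of_ne hf (Ne.symm h)]
      exact ⟨subset_supClosure (Or.inr (hp.of_ne h).1), hx₁,
        subset_supClosure (Or.inl (Or.inr rfl))⟩
  · refine ⟨?_, ?_, hp.map_sdiff_mem hf hh₁ a⟩ <;> by_cases ha : g ≤ a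
    · rw [inf_eq_left.2 ((hp.le_map_iff hf).2 ha)]
      exact hx₁
    · rw [inf_comm, hp.map_inf_eq hf hh₁ ha]
      exact subset_supClosure (Or.inr (mem_range_self _))
    · rw [sdiff_eq_bot_iff.2 ((hp.le_map_iff hf).2 ha)]
      exact hbot
    · rw [hp.sdiff_map hf ha]
      exact hx₁

theorem isSubalg_supClosure_adjoinGens (hf : IsCoheytingEmb f)
    (hp : Primitive (range f) (f g) (f gm) x₁ x₂) :
    IsSubalg (supClosure (adjoinGens f x₁ x₂)) := by
  have hx : ∀ u ∈ ({x₁, x₂} : Set L), ∀ v ∈ adjoinGens f x₁ x₂,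
      u ⊓ v ∈ supClosure (adjoinGens f x₁ x₂) ∧ u \ v ∈ supClosure (adjoinGens f x₁ x₂) ∧
        v \ u ∈ supClosure (adjoinGens f x₁ x₂) := by
    rintro u (rfl | rfl) v hv
    · exact hp.inf_sdiff_mem hf hv
    · rw [← adjoinGens_comm] at hv ⊢
      exact hp.symm.inf_sdiff_mem hf hv
  refine isSubalg_supClosure (Or.inr ⟨⊥, hf.map_bot⟩) (Or.inr ⟨⊤, hf.map_top⟩) ?_ ?_
  · rintro u (hu | ⟨a, rfl⟩) v (hv | ⟨b, rfl⟩)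
    · exact (hx u hu v (Or.inl hv)).1
    · exact (hx u hu _ (Or.inr ⟨b, rfl⟩)).1
    · exact inf_comm v (f a) ▸ (hx v hv _ (Or.inr ⟨a, rfl⟩)).1
    · exact subset_supClosure (Or.inr ⟨a ⊓ b, hf.map_inf a b⟩)
  · rintro u (hu | ⟨a, rfl⟩) v (hv | ⟨b, rfl⟩)
    · exact (hx u hu v (Or.inl hv)).2.1
    · exact (hx u hu _ (Or.inr ⟨b, rfl⟩)).2.1
    · exact (hx v hv _ (Or.inr ⟨a, rfl⟩)).2.2
    · exact subset_supClosure (Or.inr ⟨a \ b, hf.map_sdiff a b⟩)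

theorem normalForm_surjective (hf : IsCoheytingEmb f)
    (hp : Primitive (range f) (f g) (f gm) x₁ x₂)
    (hgen : GeneratesOver (range f) univ x₁ x₂) : Surjective (normalForm f x₁ x₂) := fun w =>
  supClosure_min (adjoinGens_subset_range_normalForm hf) (supClosed_range_normalForm hf) <|
    hgen.2.2.2.2 _ (hp.isSubalg_supClosure_adjoinGens hf) (fun _ h => subset_supClosure (Or.inr h))
      (subset_supClosure (Or.inl (Or.inl rfl))) (subset_supClosure (Or.inl (Or.inr rfl)))
      (mem_univ w)

theorem map_le_gens_iff (hf : IsCoheytingEmb f) (hp : Primitive (range f) (f g) (f gm) x₁ x₂)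
    (hh₁ : f h₁ = f gm ⊓ x₁) (hh₂ : f h₂ = f gm ⊓ x₂) (hR : R ↔ x₁ = x₂) (b c : Bool) :
    f a ≤ cond b x₁ ⊥ ⊔ cond c x₂ ⊥ ↔ a ≤ coreOf g h₁ h₂ R b c := by
  cases b <;> cases c
  · simp [coreOf, ← hf.map_bot, hf.le_iff_le]
  · simpa [coreOf] using hp.symm.map_le_iff hf hh₂
  · simpa [coreOf] using hp.map_le_iff hf hh₁
  · by_cases h : x₁ = x₂
    · simp [coreOf, hR.2 h, ← h, hp.map_le_iff hf hh₁]
    · simp [coreOf, mt hR.1 h, hp.sup_eq h, hf.le_iff_le]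

theorem le_normalForm_iff (hf : IsCoheytingEmb f) (hp : Primitive (range f) (f g) (f gm) x₁ x₂)
    (hR : R ↔ x₁ = x₂) (b c : Bool) :
    x₁ ≤ normalForm f x₁ x₂ (a, b, c) ↔ b ∨ c ∧ R ∨ g ≤ a := by
  obtain ⟨h₁, hh₁⟩ := hp.pred_inf_mem
  cases b
  · cases c
    · simp [normalForm, hp.le_map_iff hf]
    · by_cases h : x₁ = x₂
      · simp [normalForm, hR.2 h, h]
      · simp [normalForm, mt hR.1 h, hp.le_map_sup_iff hf hh₁ h]
  · simp only [normalForm, cond_true, true_or, iff_true]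
    exact le_sup_of_le_right le_sup_left

theorem normalForm_le_normalForm_iff (hf : IsCoheytingEmb f)
    (hp : Primitive (range f) (f g) (f gm) x₁ x₂) (hh₁ : f h₁ = f gm ⊓ x₁)
    (hh₂ : f h₂ = f gm ⊓ x₂) (hR : R ↔ x₁ = x₂) (p q : L₀ × Bool × Bool) :
    normalForm f x₁ x₂ p ≤ normalForm f x₁ x₂ q ↔ NormalFormLE g h₁ h₂ R p q := by
  obtain ⟨a, b, c⟩ := p
  obtain ⟨a', b', c'⟩ := q
  rw [normalForm_le_iff, normalForm, hf.le_sup_iff, hp.map_le_gens_iff hf hh₁ hh₂ hR,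
    sdiff_le_iff, ← normalForm, hp.le_normalForm_iff hf hR, ← normalForm_swap,
    hp.symm.le_normalForm_iff hf (hR.trans eq_comm)]
  rfl

end Primitive

theorem GeneratesOver.symm {L : Type*} [CoheytingAlgebra L] {S T : Set L} {x₁ x₂ : L}
    (h : GeneratesOver S T x₁ x₂) : GeneratesOver S T x₂ x₁ :=
  ⟨h.1, h.2.1, h.2.2.2.1, h.2.2.1, fun T' hT' hS h₁ h₂ => h.2.2.2.2 T' hT' hS h₂ h₁⟩

theorem Primitive.exists_orderIso {L₀ L₁ L₂ : Type*} [CoheytingAlgebra L₀]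
    [CoheytingAlgebra L₁] [CoheytingAlgebra L₂] {f₁ : L₀ → L₁} {f₂ : L₀ → L₂}
    (hf₁ : IsCoheytingEmb f₁) (hf₂ : IsCoheytingEmb f₂) {g gm h₁ h₂ : L₀}
    {x₁ x₂ : L₁} {y₁ y₂ : L₂}
    (hp₁ : Primitive (range f₁) (f₁ g) (f₁ gm) x₁ x₂) (hgen₁ : GeneratesOver (range f₁) univ x₁ x₂)
    (hp₂ : Primitive (range f₂) (f₂ g) (f₂ gm) y₁ y₂) (hgen₂ : GeneratesOver (range f₂) univ y₁ y₂)
    (hh₁ : f₁ h₁ = f₁ gm ⊓ x₁) (hh₂ : f₁ h₂ = f₁ gm ⊓ x₂)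
    (hk₁ : f₂ h₁ = f₂ gm ⊓ y₁) (hk₂ : f₂ h₂ = f₂ gm ⊓ y₂) (hr : x₁ = x₂ ↔ y₁ = y₂) :
    ∃ φ : L₁ ≃o L₂, ∀ a, φ (f₁ a) = f₂ a := by
  obtain ⟨φ, hφ⟩ := exists_orderIso_of_le_iff (hp₁.normalForm_surjective hf₁ hgen₁)
    (hp₂.normalForm_surjective hf₂ hgen₂) fun p q => by
      rw [hp₁.normalForm_le_normalForm_iff hf₁ hh₁ hh₂ Iff.rfl,
        hp₂.normalForm_le_normalForm_iff hf₂ hk₁ hk₂ hr]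
  exact ⟨φ, fun a => by simpa [normalForm] using hφ (a, false, false)⟩

theorem primitive_extensions_same_signature_isomorphic
    {L₀ L₁ L₂ : Type*} [CoheytingAlgebra L₀] [CoheytingAlgebra L₁] [CoheytingAlgebra L₂]
    (f₁ : L₀ → L₁) (f₂ : L₀ → L₂) (hf₁ : IsCoheytingEmb f₁) (hf₂ : IsCoheytingEmb f₂)
    (g gm : L₀)
    (x₁ x₂ : L₁) (y₁ y₂ : L₂)
    (hp₁ : Primitive (Set.range f₁) (f₁ g) (f₁ gm) x₁ x₂)
    (hgen₁ : GeneratesOver (Set.range f₁) Set.univ x₁ x₂)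
    (hp₂ : Primitive (Set.range f₂) (f₂ g) (f₂ gm) y₁ y₂)
    (hgen₂ : GeneratesOver (Set.range f₂) Set.univ y₁ y₂)
    (hsigH : f₁ ⁻¹' {f₁ gm ⊓ x₁, f₁ gm ⊓ x₂} = f₂ ⁻¹' {f₂ gm ⊓ y₁, f₂ gm ⊓ y₂})
    (hsigr : x₁ = x₂ ↔ y₁ = y₂) :
    ∃ φ : L₁ ≃ L₂, IsCoheytingEmb φ ∧ ∀ a : L₀, φ (f₁ a) = f₂ a := by
  obtain ⟨h₁, hh₁⟩ := hp₁.pred_inf_mem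
  obtain ⟨h₂, hh₂⟩ := hp₁.symm.pred_inf_mem
  obtain ⟨k₁, hk₁⟩ := hp₂.pred_inf_mem
  obtain ⟨k₂, hk₂⟩ := hp₂.symm.pred_inf_mem
  rw [← hh₁, ← hh₂, ← hk₁, ← hk₂, ← image_pair, ← image_pair,
    hf₁.injective.preimage_image, hf₂.injective.preimage_image] at hsigH
  obtain ⟨φ, hφ⟩ : ∃ φ : L₁ ≃o L₂, ∀ a, φ (f₁ a) = f₂ a := by
    rcases pair_eq_pair_iff.1 hsigH with ⟨rfl, rfl⟩ | ⟨rfl, rfl⟩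
    · exact hp₁.exists_orderIso hf₁ hf₂ hgen₁ hp₂ hgen₂ hh₁ hh₂ hk₁ hk₂ hsigr
    · exact hp₁.exists_orderIso hf₁ hf₂ hgen₁ hp₂.symm hgen₂.symm hh₁ hh₂ hk₂ hk₁
        (hsigr.trans eq_comm)
  exact ⟨φ.toEquiv, φ.isCoheytingEmb, hφ⟩
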